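/- Let p be an odd prime, k ∈ F_p with k ≠ 0, let f be a monic irreducible polynomial of degree n ≥ 1 over F_p, and let β ∈ F_{p^n} be a root of f. Then f^{Q_k} is irreducible over F_p (of degree 2n) if and only if there is no γ ∈ F_{p^n} with γ ≠ 0 and k·(γ + γ⁻¹) = β. -/

import Mathlib

/-!
For `γ ≠ 0` one has `f^{Q_k}(γ) = (γ/k)^n · f(k(γ + γ⁻¹))`, and `f^{Q_k}` is monic of degree `2n`.
If some nonzero `γ ∈ F_{p^n}` satisfies `k(γ + γ⁻¹) = β`, then `f^{Q_k}` has a root of degree at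
most `n` and is reducible. Otherwise solve the quadratic `k(γ + γ⁻¹) = β` in an algebraic closure:
`γ` is a root of `f^{Q_k}`, and `F_p(β) ⊆ F_p(γ)` with `[F_p(γ) : F_p(β)] ≤ 2`. Equality
`F_p(γ) = F_p(β)` would put `γ` inside the image of `F_{p^n}`, so `γ` has degree `2n` and
`f^{Q_k}` is its minimal polynomial.
-/

/-- The `Q_k`-transform of a polynomial `f` of degree `n` with coefficients
`f_0, …, f_n`: `f^{Q_k}(x) = k^{-n} · Σ_{j=0}^{n} f_j k^j (x²+1)^j x^{n-j}`,
which equals `(x/k)^n · f(k·(x + x⁻¹))` for all `x ≠ 0`. -/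
noncomputable def Qtransform {F : Type*} [Field F] (k : F) (f : Polynomial F) :
    Polynomial F :=
  Polynomial.C (k⁻¹ ^ f.natDegree) *
    ∑ j ∈ Finset.range (f.natDegree + 1),
      Polynomial.C (f.coeff j * k ^ j) * (Polynomial.X ^ 2 + 1) ^ j *
        Polynomial.X ^ (f.natDegree - j)

open Polynomial IntermediateField Module

section Qtransform

variable {F : Type*} [Field F] {k : F} {f : F[X]}

theorem degree_Qtransform_sub_lt (hk : k ≠ 0) (hf : f.Monic) :
    (Qtransform k f - (X ^ 2 + 1) ^ f.natDegree).degree <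
      ((X ^ 2 + 1 : F[X]) ^ f.natDegree).degree := by
  set n := f.natDegree
  have hlead : ((X ^ 2 + 1 : F[X]) ^ n).degree = ↑(2 * n) := by
    rw [degree_pow, ← C_1, degree_X_pow_add_C two_pos, nsmul_eq_mul, mul_comm]
    norm_cast
  have htail : Qtransform k f - (X ^ 2 + 1) ^ n = C (k⁻¹ ^ n) *
      ∑ j ∈ Finset.range n, C (f.coeff j * k ^ j) * (X ^ 2 + 1) ^ j * X ^ (n - j) := by
    rw [Qtransform, Finset.sum_range_succ, mul_add, hf.coeff_natDegree, Nat.sub_self, pow_zero,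
      mul_one, one_mul, ← mul_assoc, ← C_mul, ← mul_pow, inv_mul_cancel₀ hk, one_pow, C_1,
      one_mul, add_sub_cancel_right]
  rw [htail, hlead]
  refine (degree_mul_le _ _).trans_lt ?_
  rw [degree_C (pow_ne_zero _ (inv_ne_zero hk)), zero_add]
  refine (degree_sum_le _ _).trans_lt
    ((Finset.sup_lt_iff (WithBot.bot_lt_coe _)).mpr fun j hj => ?_)
  have hjn : j < n := Finset.mem_range.mp hj
  calc (C (f.coeff j * k ^ j) * (X ^ 2 + 1 : F[X]) ^ j * X ^ (n - j)).degree
      ≤ ((j * 2 + (n - j) : ℕ) : WithBot ℕ) := by compute_degree; push_cast; rfl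
    _ < ((2 * n : ℕ) : WithBot ℕ) := by exact_mod_cast (by omega)

theorem Qtransform_monic (hk : k ≠ 0) (hf : f.Monic) :
    (Qtransform k f).Monic := by
  have hmonic : ((X ^ 2 + 1 : F[X]) ^ f.natDegree).Monic := by monicity!
  simpa using hmonic.add_of_left (degree_Qtransform_sub_lt hk hf)

theorem natDegree_Qtransform (hk : k ≠ 0) (hf : f.Monic) :
    (Qtransform k f).natDegree = 2 * f.natDegree := by
  have h := natDegree_add_eq_left_of_degree_lt (degree_Qtransform_sub_lt hk hf)
  rw [add_sub_cancel] at h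
  rw [h, natDegree_pow, ← C_1, natDegree_X_pow_add_C, mul_comm]

theorem aeval_Qtransform {E : Type*} [Field E] [Algebra F E] {γ : E} (hγ : γ ≠ 0) :
    aeval γ (Qtransform k f) =
      (γ / algebraMap F E k) ^ f.natDegree * aeval (algebraMap F E k * (γ + γ⁻¹)) f := by
  rw [Qtransform, map_mul, aeval_C, map_sum, aeval_eq_sum_range, Finset.mul_sum, Finset.mul_sum]
  refine Finset.sum_congr rfl fun j hj => ?_
  have hsq : γ ^ 2 + 1 = γ * (γ + γ⁻¹) := by field_simp
  have hpow : γ ^ f.natDegree = γ ^ (f.natDegree - j) * γ ^ j := by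
    rw [← pow_add, Nat.sub_add_cancel (Finset.mem_range_succ_iff.mp hj)]
  simp only [map_mul, map_pow, map_add, aeval_C, aeval_X, map_one, Algebra.smul_def, map_inv₀]
  rw [hsq, div_pow, hpow]
  generalize γ + γ⁻¹ = s
  ring

end Qtransform

theorem exists_ne_zero_mul_add_inv_eq {E : Type*} [Field E] [IsAlgClosed E] {a : E} (ha : a ≠ 0)
    (b : E) : ∃ γ ≠ 0, a * (γ + γ⁻¹) = b := by
  have hdeg : (X ^ 2 - C (b / a) * X + 1 : E[X]).degree = 2 := by compute_degree!
  obtain ⟨γ, hγ⟩ := IsAlgClosed.exists_root _ (hdeg ▸ two_ne_zero)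
  have hquad : γ ^ 2 - b / a * γ + 1 = 0 := by simpa using hγ
  have hγ0 : γ ≠ 0 := by rintro rfl; simp at hquad
  have hsum : γ + γ⁻¹ = b / a := by
    field_simp at hquad ⊢
    linear_combination hquad
  exact ⟨γ, hγ0, by rw [hsum, mul_div_cancel₀ _ ha]⟩

section Adjoin

variable {F E : Type*} [Field F] [Field E] [Algebra F E]

theorem natDegree_minpoly_dvd_of_mem_adjoin_simple {x y : E} (hy : IsIntegral F y)
    (hx : x ∈ F⟮y⟯) : (minpoly F x).natDegree ∣ (minpoly F y).natDegree := by
  have := adjoin.finiteDimensional hy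
  have hxint : IsIntegral F x := isIntegral_iff.mp (IsIntegral.of_finite F (⟨x, hx⟩ : F⟮y⟯))
  rw [← adjoin.finrank hxint, ← adjoin.finrank hy]
  exact finrank_dvd_of_le_right (adjoin_simple_le_iff.mpr hx)

theorem mem_adjoin_simple_of_natDegree_minpoly_eq {x y : E} (hy : IsIntegral F y)
    (hx : x ∈ F⟮y⟯) (h : (minpoly F x).natDegree = (minpoly F y).natDegree) : y ∈ F⟮x⟯ := by
  have := adjoin.finiteDimensional hy
  have hxint : IsIntegral F x := isIntegral_iff.mp (IsIntegral.of_finite F (⟨x, hx⟩ : F⟮y⟯))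
  have hle : F⟮x⟯ ≤ F⟮y⟯ := adjoin_simple_le_iff.mpr hx
  rw [eq_of_le_of_finrank_eq hle (by rw [adjoin.finrank hxint, adjoin.finrank hy, h])]
  exact mem_adjoin_simple_self F y

end Adjoin

section Irreducibility

variable {F K : Type*} [Field F] [Field K] [Algebra F K] {k : F} {f : F[X]}

theorem irreducible_Qtransform_of_not_exists (hk : k ≠ 0) (hf : f.Monic) (hirr : Irreducible f)
    {β : K} (hβ : aeval β f = 0)
    (hne : ¬ ∃ γ : K, γ ≠ 0 ∧ algebraMap F K k * (γ + γ⁻¹) = β) :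
    Irreducible (Qtransform k f) := by
  let ι := IsScalarTower.toAlgHom F K (AlgebraicClosure K)
  obtain ⟨γ, hγ0, hγ⟩ := exists_ne_zero_mul_add_inv_eq (E := AlgebraicClosure K)
    (a := algebraMap F _ k) (by simpa using hk) (ι β)
  have hfβ : aeval (ι β) f = 0 := by rw [aeval_algHom_apply, hβ, map_zero]
  have hQγ : aeval γ (Qtransform k f) = 0 := by rw [aeval_Qtransform hγ0, hγ, hfβ, mul_zero]
  have hγint : IsIntegral F γ := ⟨_, Qtransform_monic hk hf, hQγ⟩
  have hβ_mem : ι β ∈ F⟮γ⟯ := hγ ▸ mul_mem (IntermediateField.algebraMap_mem _ k)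
    (add_mem (mem_adjoin_simple_self F γ) (inv_mem (mem_adjoin_simple_self F γ)))
  have hminβ : minpoly F (ι β) = f := (minpoly.eq_of_irreducible_of_monic hirr hfβ hf).symm
  obtain ⟨m, hm⟩ := natDegree_minpoly_dvd_of_mem_adjoin_simple hγint hβ_mem
  rw [hminβ] at hm
  have hdvd : minpoly F γ ∣ Qtransform k f := minpoly.dvd F γ hQγ
  have hle : (minpoly F γ).natDegree ≤ 2 * f.natDegree := by
    rw [← natDegree_Qtransform hk hf]
    exact natDegree_le_of_dvd hdvd (Qtransform_monic hk hf).ne_zero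
  have hm_ne_one : m ≠ 1 := by
    rintro rfl
    have hγ_mem : γ ∈ ι.fieldRange :=
      adjoin_simple_le_iff.mpr (AlgHom.mem_fieldRange.mpr ⟨β, rfl⟩)
        (mem_adjoin_simple_of_natDegree_minpoly_eq hγint hβ_mem (by rw [hminβ, hm, mul_one]))
    obtain ⟨γ₀, rfl⟩ := hγ_mem
    exact hne ⟨γ₀, by simpa using hγ0, ι.injective (by simpa using hγ)⟩
  have hm_two : m = 2 := by
    have hm_le : m ≤ 2 := Nat.le_of_mul_le_mul_left (by linarith) hirr.natDegree_pos
    have hm_pos : 0 < m := Nat.pos_of_mul_pos_left (hm ▸ minpoly.natDegree_pos hγint)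
    omega
  have hQ : Qtransform k f = minpoly F γ :=
    eq_of_monic_of_dvd_of_natDegree_le (minpoly.monic hγint) (Qtransform_monic hk hf) hdvd
      (by rw [natDegree_Qtransform hk hf, hm, hm_two, mul_comm])
  exact hQ ▸ minpoly.irreducible hγint

theorem not_irreducible_Qtransform_of_exists [FiniteDimensional F K] (hk : k ≠ 0)
    (hf : f.Monic) (hK : finrank F K < 2 * f.natDegree) {γ : K} (hγ0 : γ ≠ 0)
    (hroot : aeval (algebraMap F K k * (γ + γ⁻¹)) f = 0) : ¬ Irreducible (Qtransform k f) := by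
  intro hQ
  have hQγ : aeval γ (Qtransform k f) = 0 := by rw [aeval_Qtransform hγ0, hroot, mul_zero]
  have hdeg := minpoly.natDegree_le (A := F) γ
  rw [← minpoly.eq_of_irreducible_of_monic hQ hQγ (Qtransform_monic hk hf),
    natDegree_Qtransform hk hf] at hdeg
  omega

theorem irreducible_Qtransform_iff_of_finrank_eq [FiniteDimensional F K] (hk : k ≠ 0)
    (hf : f.Monic) (hirr : Irreducible f) (hK : finrank F K = f.natDegree) {β : K}
    (hβ : aeval β f = 0) :
    Irreducible (Qtransform k f) ↔ ¬ ∃ γ : K, γ ≠ 0 ∧ algebraMap F K k * (γ + γ⁻¹) = β := by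
  refine ⟨?_, irreducible_Qtransform_of_not_exists hk hf hirr hβ⟩
  rintro hQ ⟨γ, hγ0, rfl⟩
  have hn := hirr.natDegree_pos
  exact not_irreducible_Qtransform_of_exists hk hf (by omega) hγ0 hβ hQ

end Irreducibility

theorem Qtransform_irreducible_iff_general (p n : ℕ) [Fact p.Prime]
    (k : ZMod p) (hk : k ≠ 0)
    (f : Polynomial (ZMod p)) (hmonic : f.Monic) (hirr : Irreducible f)
    (hdeg : f.natDegree = n)
    (β : GaloisField p n) (hβ : Polynomial.aeval β f = 0) :
    Irreducible (Qtransform k f) ↔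
      ¬ ∃ γ : GaloisField p n, γ ≠ 0 ∧
        algebraMap (ZMod p) (GaloisField p n) k * (γ + γ⁻¹) = β := by
  have hn : n ≠ 0 := hdeg ▸ hirr.natDegree_pos.ne'
  exact irreducible_Qtransform_iff_of_finrank_eq hk hmonic hirr
    (by rw [GaloisField.finrank p hn, hdeg]) hβ

/-- Let `p` be an odd prime, `k ∈ F_p` nonzero, `f` a monic irreducible
polynomial of degree `n ≥ 1` over `F_p`, and `β ∈ F_{p^n}` a root of `f`.
Then `f^{Q_k}` is irreducible over `F_p` if and only if there is no nonzero
`γ ∈ F_{p^n}` with `k·(γ + γ⁻¹) = β`. -/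
theorem Qtransform_irreducible_iff (p n : ℕ) [Fact p.Prime]
    (hodd : Odd p) (k : ZMod p) (hk : k ≠ 0)
    (f : Polynomial (ZMod p)) (hmonic : f.Monic) (hirr : Irreducible f)
    (hdeg : f.natDegree = n) (hn : 1 ≤ n)
    (β : GaloisField p n) (hβ : Polynomial.aeval β f = 0) :
    Irreducible (Qtransform k f) ↔
      ¬ ∃ γ : GaloisField p n, γ ≠ 0 ∧
        algebraMap (ZMod p) (GaloisField p n) k * (γ + γ⁻¹) = β :=
  Qtransform_irreducible_iff_general p n k hk f hmonic hirr hdeg β hβ
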